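/- Let H be a real Hilbert space, let A : H → Set H be monotone, let B : H → H be κ-cocoercive with κ > 0 and resolvent J_{γB}, let C : H → H be monotone and μ-Lipschitz with μ > 0, and let γ > 0 and ε' ∈ (0, 1). Suppose z, z⋆, y ∈ H satisfy, with x = J_{γB} z and x⋆ = J_{γB} z⋆: 2x − z − γ C x − y ∈ γ A y and x⋆ − z⋆ − γ C x⋆ ∈ γ A x⋆. Define u = x − z + z⋆ − x⋆, z⁺ = z + y − x − γ(C y − C x), and ε = 1 − γ²μ²(1 + γ/(2κ(1 − ε'))). Then ‖z⁺ − z⋆‖² ≤ ‖z − z⋆‖² − ε‖x − y‖² − (2κε'/γ)‖u‖². -/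

import Mathlib

/-!
Write `p = x - x⋆`, `r = γ (B x - B x⋆) = (z - z⋆) - p`, `w = y - x` and `c = C y - C x`, so that
`z⁺ - z⋆ = p + r + w - γ c` and `u = -r`. Monotonicity of `A` at `(y, x⋆)`, plus `γ` times
monotonicity of `C` at `(y, x⋆)`, gives `⟪w + p, w + r - γ c⟫ ≤ 0`, and cocoercivity of `B` gives
`κ ‖r‖² ≤ γ ⟪p, r⟫`. Expanding `‖p + r + w - γ c‖²` around these two quantities leaves the cross
term `-2γ ⟪r, c⟫`, which Young's inequality with weight `2κ(1 - ε')/γ` splits between the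
cocoercivity gain and `‖c‖² ≤ μ² ‖w‖²`.
-/

open RealInnerProductSpace Pointwise

section

variable {H : Type*} [NormedAddCommGroup H] [InnerProductSpace ℝ H]

lemma inner_sub_nonneg_of_mem_smul {A : H → Set H}
    (hA : ∀ x y u v : H, u ∈ A x → v ∈ A y → 0 ≤ ⟪x - y, u - v⟫) {γ : ℝ} (hγ : 0 ≤ γ)
    {x y a b : H} (ha : a ∈ γ • A x) (hb : b ∈ γ • A y) : 0 ≤ ⟪x - y, a - b⟫ := by
  obtain ⟨u, hu, rfl⟩ := Set.mem_smul_set.mp ha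
  obtain ⟨v, hv, rfl⟩ := Set.mem_smul_set.mp hb
  rw [← smul_sub, real_inner_smul_right]
  exact mul_nonneg hγ (hA x y u v hu hv)

lemma mul_norm_smul_sq_le_inner {κ γ : ℝ} {p v : H} (h : κ * ‖v‖ ^ 2 ≤ ⟪p, v⟫) :
    κ * ‖γ • v‖ ^ 2 ≤ γ * ⟪p, γ • v⟫ := by
  rw [norm_smul, real_inner_smul_right, mul_pow, Real.norm_eq_abs, sq_abs]
  calc κ * (γ ^ 2 * ‖v‖ ^ 2) = γ ^ 2 * (κ * ‖v‖ ^ 2) := by ring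
    _ ≤ γ ^ 2 * ⟪p, v⟫ := by gcongr
    _ = γ * (γ * ⟪p, v⟫) := by ring

lemma norm_add_add_sub_smul_sq (γ : ℝ) (p r w c : H) :
    ‖p + r + w - γ • c‖ ^ 2 = ‖p + r‖ ^ 2 - ‖w‖ ^ 2 + γ ^ 2 * ‖c‖ ^ 2 - 2 * ⟪p, r⟫
      - 2 * γ * ⟪r, c⟫ + 2 * ⟪w + p, w + r - γ • c⟫ := by
  simp only [← real_inner_self_eq_norm_sq, inner_add_left, inner_add_right, inner_sub_left,
    inner_sub_right, real_inner_smul_left, real_inner_smul_right]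
  rw [real_inner_comm p r, real_inner_comm p w, real_inner_comm r w, real_inner_comm c p,
    real_inner_comm c r, real_inner_comm c w]
  ring

theorem norm_add_add_sub_smul_sq_le {γ κ μ ε' : ℝ} (hγ : 0 < γ) (hκ : 0 < κ) (hε' : ε' < 1) {p r w c : H}
    (hmono : ⟪w + p, w + r - γ • c⟫ ≤ 0) (hcoco : κ * ‖r‖ ^ 2 ≤ γ * ⟪p, r⟫)
    (hlip : ‖c‖ ≤ μ * ‖w‖) :
    ‖p + r + w - γ • c‖ ^ 2 ≤ ‖p + r‖ ^ 2
      - (1 - γ ^ 2 * μ ^ 2 * (1 + γ / (2 * κ * (1 - ε')))) * ‖w‖ ^ 2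
      - (2 * κ * ε' / γ) * ‖r‖ ^ 2 := by
  set K := 2 * κ * (1 - ε')
  have hK : 0 < K := mul_pos (by positivity) (by linarith)
  have hpr : 2 * κ / γ * ‖r‖ ^ 2 ≤ 2 * ⟪p, r⟫ := by
    rw [div_mul_eq_mul_div, div_le_iff₀ hγ]; linarith
  have hyoung : -(2 * γ * ⟪r, c⟫) ≤ K / γ * ‖r‖ ^ 2 + γ / K * (γ ^ 2 * ‖c‖ ^ 2) := by
    have hcs : -(2 * γ * ⟪r, c⟫) ≤ 2 * ‖r‖ * (γ * ‖c‖) := by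
      have := mul_le_mul_of_nonneg_left (neg_le_of_abs_le (abs_real_inner_le_norm r c))
        (by positivity : 0 ≤ 2 * γ)
      linarith
    have hamgm := two_mul_le_add_mul_sq (a := ‖r‖) (b := γ * ‖c‖) (div_pos hK hγ)
    rw [inv_div] at hamgm
    linear_combination hcs + hamgm
  have hc : ‖c‖ ^ 2 ≤ μ ^ 2 * ‖w‖ ^ 2 := by
    rw [← mul_pow]; exact pow_le_pow_left₀ (norm_nonneg c) hlip 2
  have hgain : (1 + γ / K) * (γ ^ 2 * ‖c‖ ^ 2) ≤ (1 + γ / K) * (γ ^ 2 * (μ ^ 2 * ‖w‖ ^ 2)) := by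
    gcongr
  rw [norm_add_add_sub_smul_sq]
  linear_combination 2 * hmono + hpr + hyoung + hgain

end

theorem fdrf_stmt7_general {H : Type*} [NormedAddCommGroup H] [InnerProductSpace ℝ H]
    (A : H → Set H)
    (hAmono : ∀ x y u v : H, u ∈ A x → v ∈ A y → 0 ≤ ⟪x - y, u - v⟫)
    (γ κ μ ε' : ℝ) (hγ : 0 < γ) (hκ : 0 < κ)
    (hε'1 : ε' < 1)
    (B : H → H)
    (hB : ∀ x y : H, κ * ‖B x - B y‖ ^ 2 ≤ ⟪x - y, B x - B y⟫)
    (JB : H → H) (hJB : ∀ x : H, x = JB x + γ • B (JB x))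
    (C : H → H)
    (hCmono : ∀ x y : H, 0 ≤ ⟪x - y, C x - C y⟫)
    (hClip : ∀ x y : H, ‖C x - C y‖ ≤ μ * ‖x - y‖)
    (z zs y : H) (x xs : H) (hxdef : x = JB z) (hxsdef : xs = JB zs)
    (hy : (2 : ℝ) • x - z - γ • C x - y ∈ γ • A y)
    (hxs : xs - zs - γ • C xs ∈ γ • A xs)
    (u zp : H) (hu : u = x - z + zs - xs)
    (hzp : zp = z + y - x - γ • (C y - C x)) :
    ‖zp - zs‖ ^ 2 ≤ ‖z - zs‖ ^ 2
      - (1 - γ ^ 2 * μ ^ 2 * (1 + γ / (2 * κ * (1 - ε')))) * ‖x - y‖ ^ 2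
      - (2 * κ * ε' / γ) * ‖u‖ ^ 2 := by
  have hres : z - zs = (x - xs) + γ • (B x - B xs) := by
    conv_lhs => rw [hJB z, hJB zs]
    rw [hxdef, hxsdef, smul_sub]; abel
  have hr : γ • (B x - B xs) = z - zs - (x - xs) := by rw [hres]; abel
  have hmono : ⟪(y - x) + (x - xs), (y - x) + γ • (B x - B xs) - γ • (C y - C x)⟫ ≤ 0 := by
    have hsum : 0 ≤ ⟪y - xs, ((2 : ℝ) • x - z - γ • C x - y) - (xs - zs - γ • C xs)
        + γ • (C y - C xs)⟫ := by
      rw [inner_add_right, real_inner_smul_right]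
      exact add_nonneg (inner_sub_nonneg_of_mem_smul hAmono hγ.le hy hxs)
        (mul_nonneg hγ.le (hCmono y xs))
    have e : (y - x) + γ • (B x - B xs) - γ • (C y - C x)
        = -(((2 : ℝ) • x - z - γ • C x - y) - (xs - zs - γ • C xs) + γ • (C y - C xs)) := by
      rw [hr]; module
    rw [e, inner_neg_right, sub_add_sub_cancel]
    exact neg_nonpos.mpr hsum
  have key := norm_add_add_sub_smul_sq_le hγ hκ hε'1 hmono
    (mul_norm_smul_sq_le_inner (hB x xs)) (hClip y x)
  rw [← hres, norm_sub_rev y x] at key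
  have hu' : u = -(γ • (B x - B xs)) := by rw [hu, hr]; abel
  have hzp' : zp - zs = z - zs + (y - x) - γ • (C y - C x) := by rw [hzp]; abel
  rwa [hzp', hu', norm_neg]

theorem fdrf_stmt7 {H : Type*} [NormedAddCommGroup H] [InnerProductSpace ℝ H] [CompleteSpace H]
    (A : H → Set H)
    (hAmono : ∀ x y u v : H, u ∈ A x → v ∈ A y → 0 ≤ ⟪x - y, u - v⟫)
    (γ κ μ ε' : ℝ) (hγ : 0 < γ) (hκ : 0 < κ) (hμ : 0 < μ)
    (hε'0 : 0 < ε') (hε'1 : ε' < 1)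
    (B : H → H)
    (hB : ∀ x y : H, κ * ‖B x - B y‖ ^ 2 ≤ ⟪x - y, B x - B y⟫)
    (JB : H → H) (hJB : ∀ x : H, x = JB x + γ • B (JB x))
    (C : H → H)
    (hCmono : ∀ x y : H, 0 ≤ ⟪x - y, C x - C y⟫)
    (hClip : ∀ x y : H, ‖C x - C y‖ ≤ μ * ‖x - y‖)
    (z zs y : H) (x xs : H) (hxdef : x = JB z) (hxsdef : xs = JB zs)
    (hy : (2 : ℝ) • x - z - γ • C x - y ∈ γ • A y)
    (hxs : xs - zs - γ • C xs ∈ γ • A xs)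
    (u zp : H) (hu : u = x - z + zs - xs)
    (hzp : zp = z + y - x - γ • (C y - C x)) :
    ‖zp - zs‖ ^ 2 ≤ ‖z - zs‖ ^ 2
      - (1 - γ ^ 2 * μ ^ 2 * (1 + γ / (2 * κ * (1 - ε')))) * ‖x - y‖ ^ 2
      - (2 * κ * ε' / γ) * ‖u‖ ^ 2 :=
  fdrf_stmt7_general A hAmono γ κ μ ε' hγ hκ hε'1 B hB JB hJB C hCmono hClip z zs y x xs hxdef
    hxsdef hy hxs u zp hu hzp
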